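/- arXiv:2502.04187 — 2 statements merged into one kernel-verified Lean document; each statement's English description precedes it below -/
import Mathlib

section
/- Let 0<α<β≤1. For every h∈Höl_β(X,d) and every f∈H_α, the pointwise product hf lies in H_α, and there is a constant C independent of h and f such that ‖hf‖_{E_α} ≤ C·‖h‖_{Höl_β}·‖f‖_{E_α}; that is, H_α is a Banach module over Höl_β(X,d). -/
/-!
For the `L²` part, multiplication by `h` costs at most `‖h‖_∞²`. For the energy, write
`h(x)f(x) − h(y)f(y) = h(x)(f(x) − f(y)) + (h(x) − h(y))f(y)`: the first term gives
`‖h‖_∞²` times the energy of `f`, the second, by the Hölder bound, at most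
`Höl_β(h)² ∫ f(y)² ∫ d(x,y)^(2β − d_f − 2α) dμ(x) dμ(y)`. Since `α < β`, the kernel exponent
exceeds `−d_f`, so the inner integral is bounded uniformly in `y`: cutting `X` into the dyadic
annuli `D 2^(-k-1) < d(x,y) ≤ D 2^(-k)` (`D = diam X`) and using the upper Ahlfors bound on
each ball gives a convergent geometric series.
-/

open MeasureTheory Metric ENNReal NNReal

noncomputable section

/-- The `α`-fractional energy (double lower integral) with kernel exponent `s`. -/
def fracEnergy {X : Type*} [MetricSpace X] [MeasurableSpace X]
    (μ : Measure X) (s : ℝ) (f : X → ℝ) : ℝ≥0∞ :=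
  ∫⁻ x, ∫⁻ y, ENNReal.ofReal ((f x - f y) ^ 2 / dist x y ^ s) ∂μ ∂μ

/-- The squared Sobolev norm `‖f‖_{E_α}² = ‖f‖_{L²}² + E_α(f,f)` (with the `1/2` factor
of the energy form). -/
def sobNormSq {X : Type*} [MetricSpace X] [MeasurableSpace X]
    (μ : Measure X) (s : ℝ) (f : X → ℝ) : ℝ≥0∞ :=
  (∫⁻ x, ENNReal.ofReal ((f x) ^ 2) ∂μ) + 2⁻¹ * fracEnergy μ s f

theorem Real.div_two_pow_rpow {D : ℝ} (hD : 0 ≤ D) (t : ℝ) (k : ℕ) :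
    (D / 2 ^ k) ^ t = D ^ t * (2 ^ (-t)) ^ k := by
  rw [Real.div_rpow hD (by positivity), div_eq_mul_inv, ← Real.rpow_natCast,
    ← Real.rpow_natCast, ← Real.rpow_mul zero_le_two, ← Real.rpow_mul zero_le_two,
    ← Real.rpow_neg zero_le_two]
  ring_nf

section DyadicKernel

variable {X : Type*} [PseudoMetricSpace X] [MeasurableSpace X]
  (μ : Measure X) {y : X} {D e : ℝ}

theorem lintegral_dist_rpow_le_tsum [OpensMeasurableSpace X] (hdist : ∀ x, dist x y ≤ D)
    (he : e < 0) :
    ∫⁻ x, ENNReal.ofReal (dist x y ^ e) ∂μ ≤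
      ∑' k : ℕ, ENNReal.ofReal ((D / 2 ^ (k + 1)) ^ e) * μ (closedBall y (D / 2 ^ k)) := by
  calc ∫⁻ x, ENNReal.ofReal (dist x y ^ e) ∂μ
      ≤ ∫⁻ x, ∑' k : ℕ, (closedBall y (D / 2 ^ k)).indicator
          (fun _ => ENNReal.ofReal ((D / 2 ^ (k + 1)) ^ e)) x ∂μ := lintegral_mono fun x => ?_
    _ = _ := by
      rw [lintegral_tsum fun k =>
        (measurable_const.indicator measurableSet_closedBall).aemeasurable]
      simp_rw [lintegral_indicator_const measurableSet_closedBall]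
  rcases (dist_nonneg (x := x) (y := y)).eq_or_lt with h0 | hpos
  · simp [← h0, Real.zero_rpow he.ne]
  obtain ⟨n, hn, hn'⟩ := exists_nat_pow_near ((one_le_div hpos).2 (hdist x)) one_lt_two
  have h2n : (0 : ℝ) < 2 ^ n := by positivity
  have hD : 0 < D := hpos.trans_le (hdist x)
  refine le_trans ?_ (ENNReal.le_tsum n)
  rw [Set.indicator_of_mem (mem_closedBall.2 ((le_div_iff₀ h2n).2 ?_))]
  · refine ENNReal.ofReal_le_ofReal (Real.rpow_le_rpow_of_nonpos (by positivity) ?_ he.le)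
    exact ((div_lt_iff₀ (by positivity)).2 ((div_lt_iff₀' hpos).1 hn')).le
  · exact (le_div_iff₀' hpos).1 hn

theorem tsum_rpow_mul_measure_closedBall_le {C df : ℝ} (hD : 0 ≤ D)
    (hball : ∀ k : ℕ, μ (closedBall y (D / 2 ^ k)) ≤ ENNReal.ofReal (C * (D / 2 ^ k) ^ df)) :
    ∑' k : ℕ, ENNReal.ofReal ((D / 2 ^ (k + 1)) ^ e) * μ (closedBall y (D / 2 ^ k)) ≤
      ENNReal.ofReal (C * D ^ e * D ^ df * 2 ^ (-e)) *
        (1 - ENNReal.ofReal (2 ^ (-e) * 2 ^ (-df)))⁻¹ := by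
  rw [← ENNReal.tsum_geometric, ← ENNReal.tsum_mul_left]
  refine ENNReal.tsum_le_tsum fun k => ?_
  calc ENNReal.ofReal ((D / 2 ^ (k + 1)) ^ e) * μ (closedBall y (D / 2 ^ k))
      ≤ ENNReal.ofReal ((D / 2 ^ (k + 1)) ^ e) * ENNReal.ofReal (C * (D / 2 ^ k) ^ df) := by
        gcongr
        exact hball k
    _ = ENNReal.ofReal (C * D ^ e * D ^ df * 2 ^ (-e)) *
          ENNReal.ofReal (2 ^ (-e) * 2 ^ (-df)) ^ k := by
        rw [← ENNReal.ofReal_mul (by positivity), ← ENNReal.ofReal_pow (by positivity),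
          ← ENNReal.ofReal_mul' (by positivity), Real.div_two_pow_rpow hD,
          Real.div_two_pow_rpow hD]
        congr 1
        ring

end DyadicKernel

section UpperRegular

variable {X : Type*} [PseudoMetricSpace X] [MeasurableSpace X] (μ : Measure X)
  [IsFiniteMeasure μ] {CA df : ℝ}

theorem measure_closedBall_diam_div_two_pow_le
    (hA : ∀ (x : X) (r : ℝ), 0 ≤ r → r < diam (Set.univ : Set X) →
      (μ (closedBall x r)).toReal ≤ CA * r ^ df)
    (hD : 0 < diam (Set.univ : Set X)) (y : X) (k : ℕ) :
    μ (closedBall y (diam (Set.univ : Set X) / 2 ^ k)) ≤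
      ENNReal.ofReal (max CA ((μ Set.univ).toReal / diam (Set.univ : Set X) ^ df) *
        (diam (Set.univ : Set X) / 2 ^ k) ^ df) := by
  set D := diam (Set.univ : Set X)
  rw [← ofReal_toReal (measure_ne_top μ _)]
  refine ENNReal.ofReal_le_ofReal ?_
  rcases k with _ | k
  · calc (μ (closedBall y (D / 2 ^ 0))).toReal
        ≤ (μ Set.univ).toReal :=
          toReal_mono (measure_ne_top _ _) (measure_mono (Set.subset_univ _))
      _ = (μ Set.univ).toReal / D ^ df * (D / 2 ^ 0) ^ df := by
        rw [pow_zero, div_one, div_mul_cancel₀ _ (Real.rpow_pos_of_pos hD df).ne']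
      _ ≤ _ := by gcongr; exact le_max_right _ _
  · calc _ ≤ CA * (D / 2 ^ (k + 1)) ^ df :=
          hA y _ (by positivity) (div_lt_self hD (one_lt_pow₀ (one_lt_two (α := ℝ)) k.succ_ne_zero))
      _ ≤ _ := by gcongr; exact le_max_left _ _

theorem exists_lintegral_dist_rpow_le [BoundedSpace X] [OpensMeasurableSpace X] {e : ℝ}
    (hA : ∀ (x : X) (r : ℝ), 0 ≤ r → r < diam (Set.univ : Set X) →
      (μ (closedBall x r)).toReal ≤ CA * r ^ df)
    (he : 0 < e + df) :
    ∃ K : ℝ≥0, ∀ y : X, ∫⁻ x, ENNReal.ofReal (dist x y ^ e) ∂μ ≤ K := by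
  set D := diam (Set.univ : Set X)
  have hdist : ∀ x y : X, dist x y ≤ D := fun x y =>
    dist_le_diam_of_mem (Bornology.IsBounded.all _) trivial trivial
  suffices ∃ K : ℝ≥0∞, K ≠ ⊤ ∧ ∀ y, ∫⁻ x, ENNReal.ofReal (dist x y ^ e) ∂μ ≤ K by
    obtain ⟨K, hK, hle⟩ := this
    exact ⟨K.toNNReal, fun y => (hle y).trans_eq (coe_toNNReal hK).symm⟩
  rcases le_or_gt 0 e with he0 | he0
  · refine ⟨ENNReal.ofReal (D ^ e) * μ Set.univ, mul_ne_top ofReal_ne_top (measure_ne_top _ _),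
      fun y => ?_⟩
    rw [← lintegral_const]
    exact lintegral_mono fun x => ofReal_le_ofReal (Real.rpow_le_rpow dist_nonneg (hdist x y) he0)
  rcases (diam_nonneg (s := (Set.univ : Set X))).eq_or_lt with hD0 | hD
  · refine ⟨0, zero_ne_top, fun y => ?_⟩
    have hzero : ∀ x, dist x y = 0 := fun x => le_antisymm (hD0 ▸ hdist x y) dist_nonneg
    simp [hzero, Real.zero_rpow he0.ne]
  refine ⟨_, ?_, fun y => (lintegral_dist_rpow_le_tsum μ (hdist · y) he0).trans
    (tsum_rpow_mul_measure_closedBall_le μ hD.le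
      (measure_closedBall_diam_div_two_pow_le μ hA hD y))⟩
  refine mul_ne_top ofReal_ne_top (inv_ne_top.2 (tsub_pos_of_lt ?_).ne')
  rw [← Real.rpow_add two_pos, ← ofReal_one, ofReal_lt_ofReal_iff one_pos]
  exact Real.rpow_lt_one_of_one_lt_of_neg one_lt_two (by linarith)

end UpperRegular

theorem mul_sub_mul_sq_le {a a' b b' S : ℝ} (ha : |a| ≤ S) :
    (a * b - a' * b') ^ 2 ≤ 2 * (S ^ 2 * (b - b') ^ 2 + (a - a') ^ 2 * b' ^ 2) := by
  have hsq : a ^ 2 ≤ S ^ 2 := sq_le_sq' (abs_le.1 ha).1 (abs_le.1 ha).2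
  nlinarith [sq_nonneg (a * (b - b') - (a - a') * b'), sq_nonneg (b - b'),
    mul_le_mul_of_nonneg_right hsq (sq_nonneg (b - b'))]

theorem ofReal_mul_sub_mul_sq_div_le {X : Type*} [MetricSpace X] {s : ℝ} {h g : X → ℝ}
    {H r S : ℝ≥0} (hh : HolderWith H r h) (hS : ∀ x, |h x| ≤ S) (x y : X) :
    ENNReal.ofReal ((h x * g x - h y * g y) ^ 2 / dist x y ^ s) ≤
      2 * (S ^ 2 * ENNReal.ofReal ((g x - g y) ^ 2 / dist x y ^ s) +
        H ^ 2 * ENNReal.ofReal (g y ^ 2 * dist x y ^ (2 * (r : ℝ) - s))) := by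
  rw [← ofReal_coe_nnreal, ← ofReal_coe_nnreal (p := H), ← ofReal_pow S.coe_nonneg,
    ← ofReal_pow H.coe_nonneg, ← ofReal_mul (by positivity), ← ofReal_mul (by positivity),
    ← ofReal_add (by positivity) (by positivity), ← ofReal_ofNat, ← ofReal_mul zero_le_two]
  refine ofReal_le_ofReal ?_
  rcases eq_or_ne x y with rfl | hxy
  · simp only [sub_self, ne_eq, OfNat.ofNat_ne_zero, not_false_eq_true, zero_pow, zero_div]
    positivity
  have hd : 0 < dist x y := dist_pos.2 hxy
  have hhol : (h x - h y) ^ 2 ≤ H ^ 2 * dist x y ^ (2 * (r : ℝ)) := by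
    have := hh.dist_le x y
    rw [Real.dist_eq] at this
    calc (h x - h y) ^ 2 = |h x - h y| ^ 2 := (sq_abs _).symm
      _ ≤ (H * dist x y ^ (r : ℝ)) ^ 2 := by gcongr
      _ = H ^ 2 * dist x y ^ (2 * (r : ℝ)) := by
        rw [mul_pow, ← Real.rpow_mul_natCast dist_nonneg, Nat.cast_ofNat, mul_comm (r : ℝ)]
  calc (h x * g x - h y * g y) ^ 2 / dist x y ^ s
      ≤ 2 * (S ^ 2 * (g x - g y) ^ 2 + (h x - h y) ^ 2 * g y ^ 2) / dist x y ^ s := by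
        gcongr
        exact mul_sub_mul_sq_le (hS x)
    _ ≤ 2 * (S ^ 2 * (g x - g y) ^ 2 + H ^ 2 * dist x y ^ (2 * (r : ℝ)) * g y ^ 2) /
          dist x y ^ s := by gcongr
    _ = _ := by
        rw [Real.rpow_sub hd]
        field_simp

section AeCongr

variable {X : Type*} [MetricSpace X] [MeasurableSpace X] {μ : Measure X} {s : ℝ}

theorem fracEnergy_congr_ae {f g : X → ℝ} (hfg : f =ᵐ[μ] g) :
    fracEnergy μ s f = fracEnergy μ s g := by
  refine lintegral_congr_ae ?_
  filter_upwards [hfg] with x hx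
  refine lintegral_congr_ae ?_
  filter_upwards [hfg] with y hy
  rw [hx, hy]

theorem sobNormSq_congr_ae {f g : X → ℝ} (hfg : f =ᵐ[μ] g) :
    sobNormSq μ s f = sobNormSq μ s g := by
  rw [sobNormSq, sobNormSq, fracEnergy_congr_ae hfg]
  congr 1
  refine lintegral_congr_ae ?_
  filter_upwards [hfg] with x hx
  rw [hx]

theorem fracEnergy_lt_top_of_sobNormSq_lt_top {f : X → ℝ} (hf : sobNormSq μ s f < ⊤) :
    fracEnergy μ s f < ⊤ :=
  lt_top_of_mul_ne_top_right (le_add_self.trans_lt hf).ne (by norm_num)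

end AeCongr

theorem lintegral_lintegral_mul_kernel_le {α β : Type*} [MeasurableSpace α] [MeasurableSpace β]
    {μ : Measure α} {ν : Measure β} [SFinite μ] [SFinite ν] {u : β → ℝ≥0∞}
    {k : α → β → ℝ≥0∞} {K : ℝ≥0∞} (hu : Measurable u) (hk : Measurable (Function.uncurry k))
    (hK : ∀ y, ∫⁻ x, k x y ∂μ ≤ K) :
    ∫⁻ x, ∫⁻ y, u y * k x y ∂ν ∂μ ≤ K * ∫⁻ y, u y ∂ν := by
  rw [lintegral_lintegral_swap ((hu.comp measurable_snd).mul hk).aemeasurable,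
    ← lintegral_const_mul K hu]
  refine lintegral_mono fun y => ?_
  rw [lintegral_const_mul _ hk.of_uncurry_right, mul_comm K]
  gcongr
  exact hK y

section Energy

variable {X : Type*} [MetricSpace X] [MeasurableSpace X] [SecondCountableTopology X]
  [OpensMeasurableSpace X] {μ : Measure X} [SFinite μ] {s : ℝ}

theorem fracEnergy_mul_le {h g : X → ℝ} {H r S K : ℝ≥0} (hg : Measurable g)
    (hh : HolderWith H r h) (hS : ∀ x, |h x| ≤ S)
    (hK : ∀ y, ∫⁻ x, ENNReal.ofReal (dist x y ^ (2 * (r : ℝ) - s)) ∂μ ≤ K) :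
    fracEnergy μ s (fun x => h x * g x) ≤
      2 * (S ^ 2 * fracEnergy μ s g + H ^ 2 * (K * ∫⁻ x, ENNReal.ofReal (g x ^ 2) ∂μ)) := by
  set A : X → X → ℝ≥0∞ := fun x y => ENNReal.ofReal ((g x - g y) ^ 2 / dist x y ^ s)
  have hkernel : Measurable (Function.uncurry fun x y : X =>
      ENNReal.ofReal (dist x y ^ (2 * (r : ℝ) - s))) := by fun_prop
  calc fracEnergy μ s (fun x => h x * g x)
      ≤ ∫⁻ x, ∫⁻ y, 2 * (S ^ 2 * A x y + H ^ 2 *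
          (ENNReal.ofReal (g y ^ 2) * ENNReal.ofReal (dist x y ^ (2 * (r : ℝ) - s)))) ∂μ ∂μ := by
        refine lintegral_mono fun x => lintegral_mono fun y => ?_
        rw [← ofReal_mul (sq_nonneg _)]
        exact ofReal_mul_sub_mul_sq_div_le hh hS x y
    _ = 2 * (S ^ 2 * fracEnergy μ s g + H ^ 2 * ∫⁻ x, ∫⁻ y, ENNReal.ofReal (g y ^ 2) *
          ENNReal.ofReal (dist x y ^ (2 * (r : ℝ) - s)) ∂μ ∂μ) := by
        rw [lintegral_lintegral (by fun_prop), lintegral_const_mul _ (by fun_prop),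
          lintegral_add_left (by fun_prop), lintegral_const_mul _ (by fun_prop),
          lintegral_const_mul _ (by fun_prop), fracEnergy, lintegral_lintegral (by fun_prop),
          lintegral_lintegral (by fun_prop)]
    _ ≤ _ := by
        gcongr
        exact lintegral_lintegral_mul_kernel_le (by fun_prop) hkernel hK

theorem sobNormSq_mul_le {h g : X → ℝ} {H r S K : ℝ≥0} (hg : Measurable g)
    (hh : HolderWith H r h) (hS : ∀ x, |h x| ≤ S)
    (hK : ∀ y, ∫⁻ x, ENNReal.ofReal (dist x y ^ (2 * (r : ℝ) - s)) ∂μ ≤ K) :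
    sobNormSq μ s (fun x => h x * g x) ≤
      ((2 * (1 + K) * (S + H) ^ 2 : ℝ≥0) : ℝ≥0∞) * sobNormSq μ s g := by
  set L := ∫⁻ x, ENNReal.ofReal (g x ^ 2) ∂μ
  set E := fracEnergy μ s g
  have hL : ∫⁻ x, ENNReal.ofReal ((h x * g x) ^ 2) ∂μ ≤ S ^ 2 * L := by
    rw [← lintegral_const_mul _ (by fun_prop)]
    refine lintegral_mono fun x => ?_
    rw [mul_pow, ofReal_mul (sq_nonneg _), ← ofReal_coe_nnreal, ← ofReal_pow S.coe_nonneg]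
    gcongr ?_ * _
    exact ofReal_le_ofReal (sq_le_sq.2 ((hS x).trans (le_abs_self _)))
  have halve : 2 * (S : ℝ≥0∞) ^ 2 * (2⁻¹ * E) = S ^ 2 * E := by
    rw [mul_comm 2, mul_assoc, ← mul_assoc 2, ENNReal.mul_inv_cancel two_ne_zero ofNat_ne_top,
      one_mul]
  have hcL : (S : ℝ≥0∞) ^ 2 + H ^ 2 * K ≤ ((2 * (1 + K) * (S + H) ^ 2 : ℝ≥0) : ℝ≥0∞) := by
    norm_cast
    rw [← NNReal.coe_le_coe]
    push_cast
    nlinarith [S.coe_nonneg, H.coe_nonneg, K.coe_nonneg,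
      mul_nonneg (mul_nonneg S.coe_nonneg H.coe_nonneg) K.coe_nonneg]
  have hcE : 2 * (S : ℝ≥0∞) ^ 2 ≤ ((2 * (1 + K) * (S + H) ^ 2 : ℝ≥0) : ℝ≥0∞) := by
    norm_cast
    rw [← NNReal.coe_le_coe]
    push_cast
    nlinarith [S.coe_nonneg, H.coe_nonneg, K.coe_nonneg,
      mul_nonneg (mul_nonneg S.coe_nonneg H.coe_nonneg) K.coe_nonneg]
  calc sobNormSq μ s (fun x => h x * g x)
      ≤ S ^ 2 * L + 2⁻¹ * (2 * (S ^ 2 * E + H ^ 2 * (K * L))) :=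
        add_le_add hL (by gcongr; exact fracEnergy_mul_le hg hh hS hK)
    _ = (S ^ 2 + H ^ 2 * K) * L + 2 * S ^ 2 * (2⁻¹ * E) := by
        rw [← mul_assoc, ENNReal.inv_mul_cancel two_ne_zero ofNat_ne_top, one_mul, halve]
        ring
    _ ≤ _ := by
        rw [sobNormSq, mul_add]
        gcongr

end Energy

theorem statement6_general
    {X : Type*} [MetricSpace X] [CompactSpace X] [MeasurableSpace X] [BorelSpace X]
    (μ : Measure X) [IsFiniteMeasure μ]
    (df : ℝ) (CA : ℝ)
    (hAhlfors : ∀ (x : X) (r : ℝ), 0 ≤ r → r < Metric.diam (Set.univ : Set X) →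
      CA⁻¹ * r ^ df ≤ (μ (Metric.closedBall x r)).toReal ∧
        (μ (Metric.closedBall x r)).toReal ≤ CA * r ^ df)
    (α β : ℝ) (hα0 : 0 < α) (hαβ : α < β) :
    ∃ C : ℝ, 0 < C ∧ ∀ (h f : X → ℝ) (H : ℝ≥0) (S : ℝ),
      HolderWith H β.toNNReal h → (∀ x, |h x| ≤ S) →
      MemLp f 2 μ → fracEnergy μ (df + 2 * α) f < ⊤ →
      MemLp (fun x => h x * f x) 2 μ ∧
      fracEnergy μ (df + 2 * α) (fun x => h x * f x) < ⊤ ∧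
      sobNormSq μ (df + 2 * α) (fun x => h x * f x) ≤
        ENNReal.ofReal (C ^ 2 * (S + (H : ℝ)) ^ 2) * sobNormSq μ (df + 2 * α) f := by
  rcases isEmpty_or_nonempty X with hX | hX
  · refine ⟨1, one_pos, fun h f H S _ _ _ _ => ?_⟩
    simp [Measure.eq_zero_of_isEmpty μ, sobNormSq, fracEnergy]
  have hβ : (β.toNNReal : ℝ) = β := Real.coe_toNNReal β (hα0.trans hαβ).le
  obtain ⟨K, hK⟩ := exists_lintegral_dist_rpow_le μ (fun x r hr hrD => (hAhlfors x r hr hrD).2)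
    (e := 2 * β.toNNReal - (df + 2 * α)) (by linarith)
  refine ⟨√(2 * (1 + K)), by positivity, fun h f H S hh hS hf hfE => ?_⟩
  lift S to ℝ≥0 using (abs_nonneg _).trans (hS hX.some)
  obtain ⟨g, hg, hfg⟩ := hf.aestronglyMeasurable.aemeasurable
  have hhfg : (fun x => h x * f x) =ᵐ[μ] fun x => h x * g x :=
    hfg.mono fun x hx => congrArg (h x * ·) hx
  have hbound := sobNormSq_mul_le hg hh hS hK
  have hsob : sobNormSq μ (df + 2 * α) g < ⊤ :=
    add_lt_top.2 ⟨(hf.ae_eq hfg).integrable_sq.lintegral_lt_top,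
      mul_lt_top (by norm_num) (fracEnergy_congr_ae hfg ▸ hfE)⟩
  have hC : ENNReal.ofReal (√(2 * (1 + K)) ^ 2 * (S + H) ^ 2) =
      ((2 * (1 + K) * (S + H) ^ 2 : ℝ≥0) : ℝ≥0∞) := by
    rw [Real.sq_sqrt (by positivity), ← ofReal_coe_nnreal]
    push_cast
    rfl
  have hh_top : MemLp h ⊤ μ := memLp_top_of_bound
    (hh.continuous (by simpa using hα0.trans hαβ)).aestronglyMeasurable S (.of_forall hS)
  refine ⟨hf.mul' hh_top, ?_, ?_⟩
  · rw [fracEnergy_congr_ae hhfg]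
    exact fracEnergy_lt_top_of_sobNormSq_lt_top (hbound.trans_lt (mul_lt_top coe_lt_top hsob))
  · rw [sobNormSq_congr_ae hhfg, sobNormSq_congr_ae hfg, hC]
    exact hbound

/-- For `0<α<β≤1`, the `α`-fractional Sobolev space is a Banach module over
`Höl_β(X,d)`: `h·f ∈ H_α` with `‖hf‖_{E_α} ≤ C‖h‖_{Höl_β}‖f‖_{E_α}`. -/
theorem statement6
    {X : Type*} [MetricSpace X] [CompactSpace X] [MeasurableSpace X] [BorelSpace X]
    (μ : Measure X) [IsFiniteMeasure μ]
    (df : ℝ) (hdf : 0 < df) (CA : ℝ) (hCA : 1 ≤ CA)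
    (hAhlfors : ∀ (x : X) (r : ℝ), 0 ≤ r → r < Metric.diam (Set.univ : Set X) →
      CA⁻¹ * r ^ df ≤ (μ (Metric.closedBall x r)).toReal ∧
        (μ (Metric.closedBall x r)).toReal ≤ CA * r ^ df)
    (α β : ℝ) (hα0 : 0 < α) (hαβ : α < β) (hβ : β ≤ 1) :
    ∃ C : ℝ, 0 < C ∧ ∀ (h f : X → ℝ) (H : ℝ≥0) (S : ℝ),
      HolderWith H β.toNNReal h → (∀ x, |h x| ≤ S) →
      MemLp f 2 μ → fracEnergy μ (df + 2 * α) f < ⊤ →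
      MemLp (fun x => h x * f x) 2 μ ∧
      fracEnergy μ (df + 2 * α) (fun x => h x * f x) < ⊤ ∧
      sobNormSq μ (df + 2 * α) (fun x => h x * f x) ≤
        ENNReal.ofReal (C ^ 2 * (S + (H : ℝ)) ^ 2) * sobNormSq μ (df + 2 * α) f :=
  statement6_general μ df CA hAhlfors α β hα0 hαβ
end
end

section
/- Let X be a compact abelian group with an invariant metric d and normalized Haar measure μ that is Ahlfors d_f-regular, and suppose every character of X is Lipschitz continuous. Fix 0<2α<1 and for a character φ of X define ℓ^α(φ) := ∫_X (1 − φ(y))/d(1_X,y)^{d_f+2α} dμ(y) (the integral converges absolutely). Then: (i) ℓ^α(φ) is a nonnegative real number, and ℓ^α(φ)=0 if and only if φ is the trivial character; (ii) ℓ^α(φ⁻¹)=ℓ^α(φ) for every character φ; and (iii) there is a constant C such that |ℓ^α(φψ) − ℓ^α(ψ)| ≤ C·Höl_1(φ) for all characters φ,ψ, where Höl_1(φ) is the Lipschitz constant of φ. -/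
open MeasureTheory Metric ENNReal NNReal

noncomputable section

/-- A (unitary) character of a compact group: a continuous multiplicative homomorphism
into the unit circle of `ℂ`. -/
def IsChar {X : Type*} [Monoid X] [TopologicalSpace X] (φ : X → ℂ) : Prop :=
  Continuous φ ∧ (∀ x y : X, φ (x * y) = φ x * φ y) ∧ ∀ x : X, ‖φ x‖ = 1

/-- The value `ℓ^α(φ) = ∫ (1 − φ(y))/d(1,y)^{d_f+2α} dμ(y)`, the eigenvalue of the
fractional Dirichlet Laplacian at the character `φ`. -/
def ellAlpha {X : Type*} [MetricSpace X] [One X] [MeasurableSpace X]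
    (μ : Measure X) (s : ℝ) (φ : X → ℂ) : ℂ :=
  ∫ y, (1 - φ y) / ((dist (1 : X) y ^ s : ℝ) : ℂ) ∂μ

/-!
The integrand is dominated by `Höl₁(φ) d(1,y)^(1 - d_f - 2α)`, since `‖1 - φ y‖ ≤ Höl₁(φ) d(1,y)`.
On the dyadic shells `R 2^{-n-1} < d(1,y) ≤ R 2^{-n}`, Ahlfors regularity bounds the integral of
`d(1,y)^t` by a geometric series of ratio `2^{-(d_f + t)}`, convergent because
`d_f + t = 1 - 2α > 0`.

For `‖z‖ = 1` one has `1 - Re z = ‖1 - z‖² / 2`, so `Re ℓ^α(φ)` is the integral of a nonnegative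
function that is positive on the open set `{φ ≠ 1}`; since Haar measure charges open sets it
vanishes only for the trivial character. Conjugating `φ` is inverting it, and `μ` and `d(1, ·)`
are inversion invariant, whence `ℓ^α(φ⁻¹) = ℓ^α(φ) = conj ℓ^α(φ)`. Finally, the integrands of
`ℓ^α(φψ)` and `ℓ^α(ψ)` differ by `ψ` times the integrand of `ℓ^α(φ)`.
-/

section DyadicShells

variable {X : Type*} [MetricSpace X] {x₀ : X} {R t : ℝ}

lemma ofReal_dist_rpow_le_tsum_indicator (hR : 0 < R) (hX : ∀ y, dist x₀ y ≤ R) (ht : t < 0)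
    (y : X) :
    ENNReal.ofReal (dist x₀ y ^ t) ≤
      ∑' n : ℕ, (closedBall x₀ (R * 2⁻¹ ^ n)).indicator
        (fun _ => ENNReal.ofReal ((R * 2⁻¹ ^ (n + 1)) ^ t)) y := by
  rcases eq_or_lt_of_le (dist_nonneg : 0 ≤ dist x₀ y) with hy | hy
  · simp [← hy, Real.zero_rpow ht.ne]
  obtain ⟨n, hn, hn'⟩ := exists_nat_pow_near ((one_le_div hy).mpr (hX y)) one_lt_two
  have h_le : dist x₀ y ≤ R * 2⁻¹ ^ n := by
    rw [inv_pow, ← div_eq_mul_inv]; exact (le_div_comm₀ (by positivity) hy).mp hn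
  have h_lt : R * 2⁻¹ ^ (n + 1) < dist x₀ y := by
    rw [inv_pow, ← div_eq_mul_inv]; exact (div_lt_comm₀ hy (by positivity)).mp hn'
  refine le_trans ?_ (ENNReal.le_tsum n)
  rw [Set.indicator_of_mem (mem_closedBall'.mpr h_le)]
  exact ENNReal.ofReal_le_ofReal (Real.rpow_le_rpow_of_nonpos (by positivity) h_lt.le ht.le)

lemma rpow_succ_mul_rpow_eq_geometric (hR : 0 < R) (C df : ℝ) (n : ℕ) :
    (R * 2⁻¹ ^ (n + 1)) ^ t * (C * (R * 2⁻¹ ^ n) ^ df) =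
      C * R ^ t * R ^ df * 2⁻¹ ^ t * (2⁻¹ ^ (df + t)) ^ n := by
  have h2 : (0 : ℝ) ≤ 2⁻¹ := by norm_num
  rw [Real.mul_rpow hR.le (by positivity), Real.mul_rpow hR.le (by positivity),
    ← Real.rpow_pow_comm h2, ← Real.rpow_pow_comm h2, Real.rpow_add (by norm_num), pow_succ,
    mul_pow]
  ring

lemma lintegral_ofReal_dist_rpow_lt_top [MeasurableSpace X] [OpensMeasurableSpace X]
    {μ : Measure X} {C df : ℝ} (hR : 0 < R) (hC : 0 ≤ C) (hX : ∀ y, dist x₀ y ≤ R)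
    (hball : ∀ r, 0 < r → r ≤ R → μ (closedBall x₀ r) ≤ ENNReal.ofReal (C * r ^ df))
    (ht : t < 0) (hdft : 0 < df + t) :
    ∫⁻ y, ENNReal.ofReal (dist x₀ y ^ t) ∂μ < ∞ := by
  have hq : (2⁻¹ : ℝ) ^ (df + t) < 1 := Real.rpow_lt_one (by norm_num) (by norm_num) hdft
  have hsum : Summable fun n : ℕ => C * R ^ t * R ^ df * 2⁻¹ ^ t * (2⁻¹ ^ (df + t)) ^ n :=
    (summable_geometric_of_lt_one (by positivity) hq).mul_left _
  calc ∫⁻ y, ENNReal.ofReal (dist x₀ y ^ t) ∂μ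
      ≤ ∫⁻ y, ∑' n : ℕ, (closedBall x₀ (R * 2⁻¹ ^ n)).indicator
          (fun _ => ENNReal.ofReal ((R * 2⁻¹ ^ (n + 1)) ^ t)) y ∂μ :=
        lintegral_mono (ofReal_dist_rpow_le_tsum_indicator hR hX ht)
    _ = ∑' n : ℕ,
          ENNReal.ofReal ((R * 2⁻¹ ^ (n + 1)) ^ t) * μ (closedBall x₀ (R * 2⁻¹ ^ n)) := by
        rw [lintegral_tsum fun n =>
          (measurable_const.indicator measurableSet_closedBall).aemeasurable]
        simp_rw [lintegral_indicator_const measurableSet_closedBall]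
    _ ≤ ∑' n : ℕ, ENNReal.ofReal (C * R ^ t * R ^ df * 2⁻¹ ^ t * (2⁻¹ ^ (df + t)) ^ n) := by
        refine ENNReal.tsum_le_tsum fun n => ?_
        rw [← rpow_succ_mul_rpow_eq_geometric hR, ENNReal.ofReal_mul (by positivity)]
        gcongr
        exact hball _ (by positivity)
          (mul_le_of_le_one_right hR.le (pow_le_one₀ (by norm_num) (by norm_num)))
    _ < ∞ := by
        rw [← ENNReal.ofReal_tsum_of_nonneg (fun n => by positivity) hsum]
        exact ENNReal.ofReal_lt_top

lemma integrable_dist_rpow_of_measure_closedBall_le [MeasurableSpace X] [OpensMeasurableSpace X]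
    (μ : Measure X) [IsFiniteMeasure μ] {C df : ℝ} (hR : 0 < R) (hC : 0 ≤ C)
    (hX : ∀ y, dist x₀ y ≤ R)
    (hball : ∀ r, 0 < r → r ≤ R → μ (closedBall x₀ r) ≤ ENNReal.ofReal (C * r ^ df))
    (hdft : 0 < df + t) :
    Integrable (fun y => dist x₀ y ^ t) μ := by
  have hmeas : AEStronglyMeasurable (fun y => dist x₀ y ^ t) μ :=
    ((continuous_const.dist continuous_id).measurable.pow_const t).aestronglyMeasurable
  rcases lt_or_ge t 0 with ht | ht
  · exact ⟨hmeas, (hasFiniteIntegral_iff_ofReal (ae_of_all _ fun y => by positivity)).mpr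
      (lintegral_ofReal_dist_rpow_lt_top hR hC hX hball ht hdft)⟩
  · refine (integrable_const (R ^ t)).mono' hmeas (ae_of_all _ fun y => ?_)
    rw [Real.norm_of_nonneg (by positivity)]
    exact Real.rpow_le_rpow dist_nonneg (hX y) ht

end DyadicShells

lemma integrable_dist_rpow_of_ahlfors {X : Type*} [MetricSpace X] [CompactSpace X]
    [MeasurableSpace X] [OpensMeasurableSpace X] (μ : Measure X) [IsProbabilityMeasure μ]
    (x₀ : X) {CA df t : ℝ}
    (hAhlfors : ∀ r : ℝ, 0 ≤ r → r < diam (Set.univ : Set X) →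
      (μ (closedBall x₀ r)).toReal ≤ CA * r ^ df)
    (hdft : 0 < df + t) :
    Integrable (fun y => dist x₀ y ^ t) μ := by
  set D := diam (Set.univ : Set X)
  have hX : ∀ y, dist x₀ y ≤ D := fun y =>
    dist_le_diam_of_mem isBounded_of_compactSpace (Set.mem_univ _) (Set.mem_univ _)
  rcases eq_or_lt_of_le (diam_nonneg : 0 ≤ D) with hD | hD
  · have hconst : (fun y => dist x₀ y ^ t) = fun _ => (0 : ℝ) ^ t := by
      funext y
      rw [le_antisymm (hD ▸ hX y) dist_nonneg]
    rw [hconst]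
    exact integrable_const _
  -- the term `D ^ (-df)` covers the radius `r = D`, which the Ahlfors bound leaves out
  have hC : 0 ≤ max CA (D ^ (-df)) := (by positivity : 0 ≤ D ^ (-df)).trans (le_max_right _ _)
  refine integrable_dist_rpow_of_measure_closedBall_le μ hD hC hX (fun r hr hrD => ?_) hdft
  rcases hrD.lt_or_eq with hlt | rfl
  · rw [← ENNReal.ofReal_toReal (measure_ne_top μ _)]
    refine ENNReal.ofReal_le_ofReal ((hAhlfors r hr.le hlt).trans ?_)
    gcongr
    exact le_max_left _ _
  · calc μ (closedBall x₀ D) ≤ 1 := prob_le_one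
      _ = ENNReal.ofReal (D ^ (-df) * D ^ df) := by
        rw [← Real.rpow_add hr, neg_add_cancel, Real.rpow_zero, ENNReal.ofReal_one]
      _ ≤ ENNReal.ofReal (max CA (D ^ (-df)) * D ^ df) := by
        gcongr
        exact le_max_right _ _

namespace IsChar

variable {X : Type*} [TopologicalSpace X] [Monoid X] {φ ψ : X → ℂ}

lemma map_one (hφ : IsChar φ) : φ 1 = 1 := by
  have hne : φ 1 ≠ 0 := norm_ne_zero_iff.mp (by rw [hφ.2.2]; exact one_ne_zero)
  exact mul_left_cancel₀ hne (by rw [← hφ.2.1, one_mul, mul_one])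

lemma map_inv {G : Type*} [TopologicalSpace G] [Group G] {φ : G → ℂ} (hφ : IsChar φ) (y : G) :
    φ y⁻¹ = (φ y)⁻¹ :=
  eq_inv_of_mul_eq_one_left (by rw [← hφ.2.1, inv_mul_cancel, hφ.map_one])

lemma mul (hφ : IsChar φ) (hψ : IsChar ψ) : IsChar fun x => φ x * ψ x :=
  ⟨hφ.1.mul hψ.1, fun a b => by simp only [hφ.2.1, hψ.2.1]; ring,
    fun a => by rw [norm_mul, hφ.2.2, hψ.2.2, one_mul]⟩

lemma one_sub_re_eq (hφ : IsChar φ) (y : X) : 1 - (φ y).re = ‖1 - φ y‖ ^ 2 / 2 := by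
  have h : (φ y).re * (φ y).re + (φ y).im * (φ y).im = 1 := by
    rw [← Complex.normSq_apply, ← Complex.sq_norm, hφ.2.2 y, one_pow]
  rw [Complex.sq_norm, Complex.normSq_apply, Complex.sub_re, Complex.sub_im, Complex.one_re,
    Complex.one_im]
  linarith

end IsChar

section Eigenvalue

variable {X : Type*} [MetricSpace X] {s : ℝ} {φ ψ : X → ℂ}

lemma norm_one_sub_div_rpow_le [One X] (h1 : φ 1 = 1) {K : ℝ≥0} (hK : LipschitzWith K φ)
    (y : X) : ‖(1 - φ y) / ((dist (1 : X) y ^ s : ℝ) : ℂ)‖ ≤ K * dist (1 : X) y ^ (1 - s) := by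
  rcases eq_or_lt_of_le (dist_nonneg : 0 ≤ dist (1 : X) y) with hy | hy
  · rw [← dist_eq_zero.mp hy.symm, h1, sub_self, zero_div, norm_zero]
    positivity
  calc ‖(1 - φ y) / ((dist (1 : X) y ^ s : ℝ) : ℂ)‖
        = dist (φ 1) (φ y) / dist (1 : X) y ^ s := by
        rw [norm_div, Complex.norm_real, Real.norm_of_nonneg (by positivity), h1, dist_eq_norm]
    _ ≤ K * dist (1 : X) y / dist (1 : X) y ^ s := by gcongr; exact hK.dist_le_mul 1 y
    _ = K * dist (1 : X) y ^ (1 - s) := by rw [Real.rpow_sub hy, Real.rpow_one, mul_div_assoc]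

lemma IsChar.re_ellAlpha_integrand [Monoid X] (hφ : IsChar φ) (y : X) :
    ((1 - φ y) / ((dist (1 : X) y ^ s : ℝ) : ℂ)).re =
      ‖1 - φ y‖ ^ 2 / (2 * dist (1 : X) y ^ s) := by
  rw [Complex.div_ofReal_re, Complex.sub_re, Complex.one_re, hφ.one_sub_re_eq, div_div]

variable [MeasurableSpace X] {μ : Measure X}

lemma IsChar.integrable_ellAlpha_integrand [Monoid X] [OpensMeasurableSpace X] (hφ : IsChar φ)
    {K : ℝ≥0} (hK : LipschitzWith K φ)
    (hint : Integrable (fun y => dist (1 : X) y ^ (1 - s)) μ) :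
    Integrable (fun y => (1 - φ y) / ((dist (1 : X) y ^ s : ℝ) : ℂ)) μ := by
  have hmeas : Measurable fun y => (1 - φ y) / ((dist (1 : X) y ^ s : ℝ) : ℂ) :=
    (continuous_const.sub hφ.1).measurable.div
      (Complex.measurable_ofReal.comp
        ((continuous_const.dist continuous_id).measurable.pow_const s))
  exact (hint.const_mul K).mono' hmeas.aestronglyMeasurable
    (ae_of_all _ (norm_one_sub_div_rpow_le hφ.map_one hK))

lemma IsChar.ellAlpha_inv [Group X] [MeasurableInv X] [μ.IsInvInvariant]
    (hinv : ∀ y : X, dist 1 y⁻¹ = dist 1 y) (hφ : IsChar φ) :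
    ellAlpha μ s (fun x => (φ x)⁻¹) = ellAlpha μ s φ := by
  rw [ellAlpha, ellAlpha, ← integral_inv_eq_self _ μ]
  simp only [hφ.map_inv, hinv, inv_inv]

lemma IsChar.conj_ellAlpha [Monoid X] (hφ : IsChar φ) :
    starRingEnd ℂ (ellAlpha μ s φ) = ellAlpha μ s (fun x => (φ x)⁻¹) := by
  rw [ellAlpha, ellAlpha, ← integral_conj]
  congr with y
  rw [map_div₀, map_sub, _root_.map_one, Complex.conj_ofReal, Complex.inv_eq_conj (hφ.2.2 y)]

lemma IsChar.im_ellAlpha [Group X] [MeasurableInv X] [μ.IsInvInvariant]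
    (hinv : ∀ y : X, dist 1 y⁻¹ = dist 1 y) (hφ : IsChar φ) : (ellAlpha μ s φ).im = 0 :=
  Complex.conj_eq_iff_im.mp (hφ.conj_ellAlpha.trans (hφ.ellAlpha_inv hinv))

lemma IsChar.re_ellAlpha [Monoid X] (hφ : IsChar φ)
    (hint : Integrable (fun y => (1 - φ y) / ((dist (1 : X) y ^ s : ℝ) : ℂ)) μ) :
    (ellAlpha μ s φ).re = ∫ y, ‖1 - φ y‖ ^ 2 / (2 * dist (1 : X) y ^ s) ∂μ := by
  rw [ellAlpha, ← RCLike.re_to_complex, ← integral_re hint]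
  simp only [RCLike.re_to_complex, hφ.re_ellAlpha_integrand]

lemma IsChar.re_ellAlpha_nonneg [Monoid X] (hφ : IsChar φ)
    (hint : Integrable (fun y => (1 - φ y) / ((dist (1 : X) y ^ s : ℝ) : ℂ)) μ) :
    0 ≤ (ellAlpha μ s φ).re := by
  rw [hφ.re_ellAlpha hint]
  positivity

lemma IsChar.ellAlpha_eq_zero_iff [Monoid X] [μ.IsOpenPosMeasure] (hφ : IsChar φ)
    (hint : Integrable (fun y => (1 - φ y) / ((dist (1 : X) y ^ s : ℝ) : ℂ)) μ) :
    ellAlpha μ s φ = 0 ↔ ∀ x : X, φ x = 1 := by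
  refine ⟨fun h0 => ?_, fun h => by simp [ellAlpha, h]⟩
  set g : X → ℝ := fun y => ‖1 - φ y‖ ^ 2 / (2 * dist (1 : X) y ^ s)
  have hg_int : Integrable g μ :=
    hint.re.congr (ae_of_all _ fun y => hφ.re_ellAlpha_integrand y)
  have hg_zero : g =ᵐ[μ] 0 := by
    refine (integral_eq_zero_iff_of_nonneg (fun y => by positivity) hg_int).mp ?_
    rw [← hφ.re_ellAlpha hint, h0, Complex.zero_re]
  have hsupp : {y | φ y ≠ 1} ⊆ Function.support g := by
    intro y hy
    have hy1 : y ≠ 1 := fun h => hy (h ▸ hφ.map_one)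
    have hpos : 0 < g y :=
      div_pos (pow_pos (norm_pos_iff.mpr (sub_ne_zero.mpr (Ne.symm hy))) 2)
        (mul_pos two_pos (Real.rpow_pos_of_pos (dist_pos.mpr (Ne.symm hy1)) s))
    exact hpos.ne'
  have hopen : IsOpen {y | φ y ≠ 1} := isOpen_ne_fun hφ.1 continuous_const
  have hempty := (hopen.measure_eq_zero_iff μ).mp
    (measure_mono_null hsupp (μ.measure_support_eq_zero_iff.mpr hg_zero))
  exact fun x => by_contra fun hx => hempty.subset hx

lemma IsChar.norm_ellAlpha_mul_sub_le [Monoid X] (hφ : IsChar φ) (hψ : IsChar ψ) {K : ℝ≥0}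
    (hK : LipschitzWith K φ) (hint : Integrable (fun y => dist (1 : X) y ^ (1 - s)) μ)
    (hφψ : Integrable (fun y => (1 - φ y * ψ y) / ((dist (1 : X) y ^ s : ℝ) : ℂ)) μ)
    (hψint : Integrable (fun y => (1 - ψ y) / ((dist (1 : X) y ^ s : ℝ) : ℂ)) μ) :
    ‖ellAlpha μ s (fun x => φ x * ψ x) - ellAlpha μ s ψ‖ ≤
      K * ∫ y, dist (1 : X) y ^ (1 - s) ∂μ := by
  rw [ellAlpha, ellAlpha, ← integral_sub hφψ hψint, ← integral_const_mul]
  refine norm_integral_le_of_norm_le (hint.const_mul _) (ae_of_all _ fun y => ?_)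
  have hfactor : (1 - φ y * ψ y) / ((dist (1 : X) y ^ s : ℝ) : ℂ) -
      (1 - ψ y) / ((dist (1 : X) y ^ s : ℝ) : ℂ) =
      ψ y * ((1 - φ y) / ((dist (1 : X) y ^ s : ℝ) : ℂ)) := by
    rw [div_sub_div_same, ← mul_div_assoc]
    ring
  rw [hfactor, norm_mul, hψ.2.2, one_mul]
  exact norm_one_sub_div_rpow_le hφ.map_one hK y

end Eigenvalue

theorem statement18_general
    {X : Type*} [MetricSpace X] [CompactSpace X] [CommGroup X]
    [MeasurableSpace X] [BorelSpace X]
    -- the metric is bi-invariant and inversion-invariant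
    (hdinv' : ∀ x y : X, dist x⁻¹ y⁻¹ = dist x y)
    -- normalized Haar measure
    (μ : Measure X) [IsProbabilityMeasure μ]
    [μ.IsInvInvariant] [μ.IsOpenPosMeasure]
    (df : ℝ) (CA : ℝ)
    (hAhlfors : ∀ (x : X) (r : ℝ), 0 ≤ r → r < Metric.diam (Set.univ : Set X) →
      CA⁻¹ * r ^ df ≤ (μ (Metric.closedBall x r)).toReal ∧
        (μ (Metric.closedBall x r)).toReal ≤ CA * r ^ df)
    -- every character of `X` is Lipschitz continuous
    (hLip : ∀ φ : X → ℂ, IsChar φ → ∃ K : ℝ≥0, LipschitzWith K φ)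
    (α : ℝ) (hα1 : 2 * α < 1) :
    -- (i) absolute convergence; `ℓ^α(φ)` is a nonnegative real, zero iff `φ` is trivial
    (∀ φ : X → ℂ, IsChar φ →
      Integrable (fun y => (1 - φ y) / ((dist (1 : X) y ^ (df + 2 * α) : ℝ) : ℂ)) μ ∧
      (ellAlpha μ (df + 2 * α) φ).im = 0 ∧
      0 ≤ (ellAlpha μ (df + 2 * α) φ).re ∧
      (ellAlpha μ (df + 2 * α) φ = 0 ↔ ∀ x : X, φ x = 1)) ∧
    -- (ii) symmetry under inversion
    (∀ φ : X → ℂ, IsChar φ →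
      ellAlpha μ (df + 2 * α) (fun x => (φ x)⁻¹) = ellAlpha μ (df + 2 * α) φ) ∧
    -- (iii) translation boundedness
    (∃ C : ℝ, 0 < C ∧ ∀ φ ψ : X → ℂ, IsChar φ → IsChar ψ →
      ∀ K : ℝ≥0, LipschitzWith K φ →
        ‖ellAlpha μ (df + 2 * α) (fun x => φ x * ψ x) -
            ellAlpha μ (df + 2 * α) ψ‖ ≤ C * (K : ℝ)) := by
  have : MeasurableInv X := ⟨(Isometry.of_dist_eq hdinv').continuous.measurable⟩
  have hinv : ∀ y : X, dist 1 y⁻¹ = dist 1 y := fun y => by simpa using hdinv' 1 y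
  have hkernel : Integrable (fun y => dist (1 : X) y ^ (1 - (df + 2 * α))) μ :=
    integrable_dist_rpow_of_ahlfors μ 1 (fun r hr hrD => (hAhlfors 1 r hr hrD).2) (by linarith)
  have hint : ∀ φ : X → ℂ, IsChar φ →
      Integrable (fun y => (1 - φ y) / ((dist (1 : X) y ^ (df + 2 * α) : ℝ) : ℂ)) μ :=
    fun φ hφ => (hLip φ hφ).elim fun _ hK => hφ.integrable_ellAlpha_integrand hK hkernel
  have hkernel_nonneg : 0 ≤ ∫ y, dist (1 : X) y ^ (1 - (df + 2 * α)) ∂μ := by positivity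
  refine ⟨fun φ hφ => ⟨hint φ hφ, hφ.im_ellAlpha hinv, hφ.re_ellAlpha_nonneg (hint φ hφ),
      hφ.ellAlpha_eq_zero_iff (hint φ hφ)⟩,
    fun φ hφ => hφ.ellAlpha_inv hinv,
    ⟨(∫ y, dist (1 : X) y ^ (1 - (df + 2 * α)) ∂μ) + 1, by linarith,
      fun φ ψ hφ hψ K hK => ?_⟩⟩
  calc _ ≤ K * ∫ y, dist (1 : X) y ^ (1 - (df + 2 * α)) ∂μ :=
        hφ.norm_ellAlpha_mul_sub_le hψ hK hkernel (hint _ (hφ.mul hψ)) (hint ψ hψ)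
    _ ≤ _ := by nlinarith [K.coe_nonneg]

/-- On a compact abelian metric group with Ahlfors regular Haar measure
whose characters are Lipschitz, `ℓ^α` is a proper translation summable-type function:
it is nonnegative real, vanishes exactly at the trivial character, is symmetric under
inversion, and satisfies `|ℓ^α(φψ) − ℓ^α(ψ)| ≤ C·Höl₁(φ)`. -/
theorem statement18
    {X : Type*} [MetricSpace X] [CompactSpace X] [CommGroup X]
    [MeasurableSpace X] [BorelSpace X]
    -- the metric is bi-invariant and inversion-invariant
    (hdinv : ∀ a x y : X, dist (a * x) (a * y) = dist x y)
    (hdinv' : ∀ x y : X, dist x⁻¹ y⁻¹ = dist x y)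
    -- normalized Haar measure
    (μ : Measure X) [IsProbabilityMeasure μ] [μ.IsMulLeftInvariant]
    [μ.IsInvInvariant] [μ.IsOpenPosMeasure]
    (df : ℝ) (hdf : 0 < df) (CA : ℝ) (hCA : 1 ≤ CA)
    (hAhlfors : ∀ (x : X) (r : ℝ), 0 ≤ r → r < Metric.diam (Set.univ : Set X) →
      CA⁻¹ * r ^ df ≤ (μ (Metric.closedBall x r)).toReal ∧
        (μ (Metric.closedBall x r)).toReal ≤ CA * r ^ df)
    -- every character of `X` is Lipschitz continuous
    (hLip : ∀ φ : X → ℂ, IsChar φ → ∃ K : ℝ≥0, LipschitzWith K φ)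
    (α : ℝ) (hα0 : 0 < α) (hα1 : 2 * α < 1) :
    -- (i) absolute convergence; `ℓ^α(φ)` is a nonnegative real, zero iff `φ` is trivial
    (∀ φ : X → ℂ, IsChar φ →
      Integrable (fun y => (1 - φ y) / ((dist (1 : X) y ^ (df + 2 * α) : ℝ) : ℂ)) μ ∧
      (ellAlpha μ (df + 2 * α) φ).im = 0 ∧
      0 ≤ (ellAlpha μ (df + 2 * α) φ).re ∧
      (ellAlpha μ (df + 2 * α) φ = 0 ↔ ∀ x : X, φ x = 1)) ∧
    -- (ii) symmetry under inversion
    (∀ φ : X → ℂ, IsChar φ →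
      ellAlpha μ (df + 2 * α) (fun x => (φ x)⁻¹) = ellAlpha μ (df + 2 * α) φ) ∧
    -- (iii) translation boundedness
    (∃ C : ℝ, 0 < C ∧ ∀ φ ψ : X → ℂ, IsChar φ → IsChar ψ →
      ∀ K : ℝ≥0, LipschitzWith K φ →
        ‖ellAlpha μ (df + 2 * α) (fun x => φ x * ψ x) -
            ellAlpha μ (df + 2 * α) ψ‖ ≤ C * (K : ℝ)) :=
  statement18_general hdinv' μ df CA hAhlfors hLip α hα1
end
end
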